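/- Let a > 0 be real and let b ∈ ℂ with |b| < 1 and |a·b| < 1. Let s and r be the principal square roots of 1 - b² and 1 - a²b² respectively (both lie in the open right half-plane, so s and r are well-defined and nonzero). Set x₋ := b/s - a·b/r, y₊ := 1/s + 1/r, and M_n'(b) := (i/2)·[[x₋ - 2i, y₊], [-y₊, -x₋ - 2i]] ∈ M₂(ℂ). Then det M_n'(b) = 0 if and only if b = 0. -/

import Mathlib

open Complex

/-- The matrix `M_n'(b) = (i/2)·[[x₋ - 2i, y₊],[-y₊, -x₋ - 2i]]` with
`x₋ = b/s - ab/r` and `y₊ = 1/s + 1/r`. -/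
noncomputable def Mnp (a : ℝ) (b s r : ℂ) : Matrix (Fin 2) (Fin 2) ℂ :=
  (Complex.I / 2) •
    !![(b / s - (a : ℂ) * b / r) - 2 * Complex.I, 1 / s + 1 / r;
       -(1 / s + 1 / r), -(b / s - (a : ℂ) * b / r) - 2 * Complex.I]

/-! The determinant is `(x₋² - y₊² + 4) / 4`, and the relations `s² = 1 - b²`,
`r² = 1 - a²b²` collapse `x₋² - y₊²` to `-2 - 2(ab² + 1)/(sr)`. So `det = 0` exactly when
`sr = 1 + ab²`; squaring this gives `b²(1 + a)² = 0`, while for `b = 0` the positivity of the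
real parts forces `s = r = 1`. -/

lemma det_Mnp (a : ℝ) (b s r : ℂ) (hs : s ≠ 0) (hr : r ≠ 0)
    (hs2 : s ^ 2 = 1 - b ^ 2) (hr2 : r ^ 2 = 1 - (a : ℂ) ^ 2 * b ^ 2) :
    (Mnp a b s r).det = (s * r - ((a : ℂ) * b ^ 2 + 1)) / (2 * (s * r)) := by
  simp only [Mnp, Matrix.det_fin_two, Matrix.smul_apply, Matrix.of_apply, Matrix.cons_val',
    Matrix.cons_val_zero, Matrix.cons_val_one, Matrix.empty_val', Matrix.cons_val_fin_one,
    smul_eq_mul]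
  field_simp
  linear_combination (2 * r ^ 2 + (a : ℂ) ^ 2 * b ^ 2 - 1) * hs2 + (1 - b ^ 2) * hr2 +
    (-(b * (r - s * (a : ℂ))) ^ 2 + (r + s) ^ 2 + 4 * s ^ 2 * r ^ 2 * (I ^ 2 - 1)) * I_sq

lemma Complex.eq_one_of_sq_eq_one_of_re_pos {z : ℂ} (hz : z ^ 2 = 1) (hre : 0 < z.re) :
    z = 1 := by
  refine (sq_eq_one_iff.mp hz).resolve_right ?_
  rintro rfl
  norm_num at hre

lemma sq_mul_sq_add_one_eq_zero_of_mul_eq (a b s r : ℂ)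
    (hs2 : s ^ 2 = 1 - b ^ 2) (hr2 : r ^ 2 = 1 - a ^ 2 * b ^ 2) (h : s * r = a * b ^ 2 + 1) :
    b ^ 2 * (a + 1) ^ 2 = 0 := by
  linear_combination (-(s * r + (a * b ^ 2 + 1))) * h + r ^ 2 * hs2 + (1 - b ^ 2) * hr2

theorem statement16_general (a : ℝ) (ha : 0 < a) (b : ℂ)
    (s r : ℂ)
    (hs2 : s ^ 2 = 1 - b ^ 2) (hsre : 0 < s.re)
    (hr2 : r ^ 2 = 1 - (a : ℂ) ^ 2 * b ^ 2) (hrre : 0 < r.re) :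
    (Mnp a b s r).det = 0 ↔ b = 0 := by
  have hs : s ≠ 0 := by rintro rfl; simp at hsre
  have hr : r ≠ 0 := by rintro rfl; simp at hrre
  rw [det_Mnp a b s r hs hr hs2 hr2, div_eq_zero_iff, or_iff_left (by simp [hs, hr]), sub_eq_zero]
  constructor
  · intro h
    have ha1 : (a : ℂ) + 1 ≠ 0 := by exact_mod_cast (by linarith : a + 1 ≠ 0)
    simpa [ha1] using sq_mul_sq_add_one_eq_zero_of_mul_eq _ b s r hs2 hr2 h
  · rintro rfl
    rw [eq_one_of_sq_eq_one_of_re_pos (by simpa using hs2) hsre,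
      eq_one_of_sq_eq_one_of_re_pos (by simpa using hr2) hrre]
    ring

/-- for `a > 0`, `|b| < 1`, `|ab| < 1`, with `s`, `r` the principal
square roots of `1 - b²` and `1 - a²b²` (the unique square roots with positive
real part), `det M_n'(b) = 0` if and only if `b = 0`. -/
theorem statement16 (a : ℝ) (ha : 0 < a) (b : ℂ)
    (hb : ‖b‖ < 1) (hab : ‖(a : ℂ) * b‖ < 1)
    (s r : ℂ)
    (hs2 : s ^ 2 = 1 - b ^ 2) (hsre : 0 < s.re)
    (hr2 : r ^ 2 = 1 - (a : ℂ) ^ 2 * b ^ 2) (hrre : 0 < r.re) :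
    (Mnp a b s r).det = 0 ↔ b = 0 :=
  statement16_general a ha b s r hs2 hsre hr2 hrre
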